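/- If G is a connected well-covered graph with α(G) = 3, then s₁ ≤ s₂, where s₁ = |V(G)| and s₂ is the number of independent pairs of vertices; consequently I(G;x) = 1 + s₁x + s₂x² + s₃x³ is unimodal. -/
import Mathlib


open Polynomial Classical in
/-- The set of stable (independent) sets of a graph, as finsets. -/
noncomputable def stableSets {V : Type*} [Fintype V] (G : SimpleGraph V) : Finset (Finset V) :=
  Finset.univ.filter (fun s : Finset V => ∀ v ∈ s, ∀ w ∈ s, ¬ G.Adj v w)

open Polynomial in
/-- The independence polynomial of a finite simple graph. -/
noncomputable def indepPoly {V : Type*} [Fintype V] (G : SimpleGraph V) : Polynomial ℤ :=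
  ∑ s ∈ stableSets G, X ^ s.card

/-- The independence number: the maximum size of a stable set. -/
noncomputable def indepNum {V : Type*} [Fintype V] (G : SimpleGraph V) : ℕ :=
  (stableSets G).sup Finset.card

open Classical in
/-- `sCount G k` is the number of stable sets of cardinality `k` in `G`. -/
noncomputable def sCount {V : Type*} [Fintype V] (G : SimpleGraph V) (k : ℕ) : ℕ :=
  ((stableSets G).filter (fun s => s.card = k)).card

/-- A polynomial is unimodal if its coefficient sequence increases up to some mode `k`
and decreases afterwards. -/
def PolyUnimodal (p : Polynomial ℤ) : Prop :=
  ∃ k, (∀ i j, i ≤ j → j ≤ k → p.coeff i ≤ p.coeff j) ∧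
    (∀ i j, k ≤ i → i ≤ j → p.coeff j ≤ p.coeff i)

/-- A polynomial is log-concave if `a_{i-1} * a_{i+1} ≤ a_i ^ 2` for all `i ≥ 1`. -/
def PolyLogConcave (p : Polynomial ℤ) : Prop :=
  ∀ i, 1 ≤ i → p.coeff (i - 1) * p.coeff (i + 1) ≤ p.coeff i ^ 2

/-- A graph is well-covered if every maximal stable set is a maximum stable set. -/
def WellCovered {V : Type*} [Fintype V] (G : SimpleGraph V) : Prop :=
  ∀ s ∈ stableSets G, (∀ t ∈ stableSets G, s ⊆ t → s = t) → s.card = indepNum G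

section Aux
variable {V : Type*} [Fintype V] (G : SimpleGraph V)

lemma mem_stableSets {s : Finset V} :
    s ∈ stableSets G ↔ ∀ v ∈ s, ∀ w ∈ s, ¬ G.Adj v w := by
  simp [stableSets]

lemma stable_subset {s t : Finset V} (h : s ⊆ t) (ht : t ∈ stableSets G) :
    s ∈ stableSets G := by
  rw [mem_stableSets] at *
  exact fun v hv w hw => ht v (h hv) w (h hw)

lemma empty_stable : (∅ : Finset V) ∈ stableSets G := by simp [mem_stableSets]

lemma singleton_stable (v : V) : ({v} : Finset V) ∈ stableSets G := by
  simp [mem_stableSets]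

lemma exists_maximal_superset {s : Finset V} (hs : s ∈ stableSets G) :
    ∃ t ∈ stableSets G, s ⊆ t ∧ ∀ u ∈ stableSets G, t ⊆ u → t = u := by
  classical
  set T := (stableSets G).filter (fun t => s ⊆ t) with hT
  have hne : T.Nonempty := ⟨s, by simp [hT, hs]⟩
  obtain ⟨t, htT, hmax⟩ := T.exists_max_image Finset.card hne
  rw [hT, Finset.mem_filter] at htT
  refine ⟨t, htT.1, htT.2, fun u hu hsub => ?_⟩
  have huT : u ∈ T := by simp [hT, hu, htT.2.trans hsub]
  exact Finset.eq_of_subset_of_card_le hsub (hmax u huT)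

lemma coeff_indepPoly (k : ℕ) : (indepPoly G).coeff k = (sCount G k : ℤ) := by
  unfold indepPoly sCount
  rw [Polynomial.finset_sum_coeff]
  simp only [Polynomial.coeff_X_pow]
  rw [Finset.sum_boole]
  congr 2
  ext s
  simp [eq_comm]

lemma sCount_one : sCount G 1 = Fintype.card V := by
  classical
  unfold sCount
  have : (stableSets G).filter (fun s => s.card = 1)
      = Finset.univ.image (fun v => ({v} : Finset V)) := by
    ext s
    simp only [Finset.mem_filter, Finset.mem_image, Finset.mem_univ, true_and]
    constructor
    · rintro ⟨-, hcard⟩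
      obtain ⟨v, rfl⟩ := Finset.card_eq_one.mp hcard
      exact ⟨v, rfl⟩
    · rintro ⟨v, rfl⟩
      exact ⟨singleton_stable G v, rfl⟩
  rw [this, Finset.card_image_of_injective _ (fun a b h => by simpa using h),
    Finset.card_univ]

lemma sCount_zero : sCount G 0 = 1 := by
  classical
  unfold sCount
  rw [show (stableSets G).filter (fun s => s.card = 0) = {∅} from ?_]
  · rfl
  · ext s
    simp only [Finset.mem_filter, Finset.card_eq_zero, Finset.mem_singleton]
    exact ⟨fun h => h.2, fun h => ⟨h ▸ empty_stable G, h⟩⟩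

end Aux

section Main
variable {V : Type*} [Fintype V] {G : SimpleGraph V}

open Classical in
lemma vertex_two_pairs (hwc : ∀ s ∈ stableSets G,
      (∀ t ∈ stableSets G, s ⊆ t → s = t) → s.card = indepNum G)
    (hα : indepNum G = 3) (v : V) :
    2 ≤ (((stableSets G).filter (fun s => s.card = 2)).filter (fun p => v ∈ p)).card := by
  classical
  obtain ⟨t, ht, hsub, hmax⟩ := exists_maximal_superset G (singleton_stable G v)
  have hcard : t.card = 3 := by rw [hwc t ht hmax, hα]
  have hv : v ∈ t := hsub (Finset.mem_singleton_self v)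
  have herase : (t.erase v).card = 2 := by
    rw [Finset.card_erase_of_mem hv, hcard]
  obtain ⟨a, b, hab, habeq⟩ := Finset.card_eq_two.mp herase
  have ha : a ∈ t.erase v := habeq ▸ (by simp)
  have hb : b ∈ t.erase v := habeq ▸ (by simp)
  have hav : a ≠ v := Finset.ne_of_mem_erase ha
  have hbv : b ≠ v := Finset.ne_of_mem_erase hb
  have ha' : a ∈ t := Finset.mem_of_mem_erase ha
  have hb' : b ∈ t := Finset.mem_of_mem_erase hb
  have hq1 : ({v, a} : Finset V) ∈ ((stableSets G).filter (fun s => s.card = 2)).filter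
      (fun p => v ∈ p) := by
    refine Finset.mem_filter.mpr ⟨Finset.mem_filter.mpr ⟨?_, ?_⟩, by simp⟩
    · exact stable_subset G (by intro x hx; simp at hx; rcases hx with rfl | rfl <;> assumption) ht
    · rw [Finset.card_insert_of_notMem (by simp [hav.symm, Ne.symm]), Finset.card_singleton]
  have hq2 : ({v, b} : Finset V) ∈ ((stableSets G).filter (fun s => s.card = 2)).filter
      (fun p => v ∈ p) := by
    refine Finset.mem_filter.mpr ⟨Finset.mem_filter.mpr ⟨?_, ?_⟩, by simp⟩
    · exact stable_subset G (by intro x hx; simp at hx; rcases hx with rfl | rfl <;> assumption) ht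
    · rw [Finset.card_insert_of_notMem (by simp [hbv.symm, Ne.symm]), Finset.card_singleton]
  have hne : ({v, a} : Finset V) ≠ {v, b} := by
    intro h
    have : a ∈ ({v, b} : Finset V) := h ▸ (by simp)
    simp [hav, hab] at this
  exact Finset.one_lt_card.mpr ⟨_, hq1, _, hq2, hne⟩

lemma card_le_sCount_two (hwc : ∀ s ∈ stableSets G,
      (∀ t ∈ stableSets G, s ⊆ t → s = t) → s.card = indepNum G)
    (hα : indepNum G = 3) :
    Fintype.card V ≤ sCount G 2 := by
  classical
  set P := (stableSets G).filter (fun s => s.card = 2) with hP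
  have h1 : ∑ p ∈ P, p.card = 2 * P.card := by
    rw [Finset.sum_congr rfl (fun p hp => (Finset.mem_filter.mp hp).2), Finset.sum_const,
      smul_eq_mul, mul_comm]
  have h2 : ∑ p ∈ P, p.card = ∑ v : V, (P.filter (fun p => v ∈ p)).card := by
    calc ∑ p ∈ P, p.card = ∑ p ∈ P, ∑ v : V, if v ∈ p then 1 else 0 := by
          refine Finset.sum_congr rfl fun p _ => ?_
          simp [Finset.sum_ite_mem]
      _ = ∑ v : V, ∑ p ∈ P, if v ∈ p then 1 else 0 := Finset.sum_comm
      _ = ∑ v : V, (P.filter (fun p => v ∈ p)).card := by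
          refine Finset.sum_congr rfl fun v _ => ?_
          simp [Finset.sum_ite, Finset.filter_not]
  have h3 : 2 * Fintype.card V ≤ ∑ v : V, (P.filter (fun p => v ∈ p)).card := by
    calc 2 * Fintype.card V = ∑ _v : V, 2 := by
          rw [Finset.sum_const, smul_eq_mul, mul_comm, Finset.card_univ]
      _ ≤ _ := Finset.sum_le_sum fun v _ => vertex_two_pairs hwc hα v
  have : 2 * Fintype.card V ≤ 2 * P.card := by omega
  have : Fintype.card V ≤ P.card := by omega
  exact this

end Main

section Final
variable {V : Type*} [Fintype V] {G : SimpleGraph V}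

lemma sCount_eq_zero_of_gt {k : ℕ} (h : indepNum G < k) : sCount G k = 0 := by
  classical
  unfold sCount
  rw [Finset.card_eq_zero, Finset.filter_eq_empty_iff]
  intro s hs hc
  have := Finset.le_sup (f := Finset.card) hs
  unfold indepNum at h
  omega


theorem connected_wellCovered_alpha_three_unimodal'
    (hwc : ∀ s ∈ stableSets G, (∀ t ∈ stableSets G, s ⊆ t → s = t) → s.card = indepNum G)
    (hα : indepNum G = 3) :
    sCount G 1 ≤ sCount G 2 ∧ PolyUnimodal (indepPoly G) := by
  have hcv : Nonempty V := by
    obtain ⟨s, hs, hcard⟩ := Finset.exists_mem_eq_sup (stableSets G) ⟨∅, empty_stable G⟩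
      Finset.card
    have h3 : s.card = 3 := by
      have hh := hα
      unfold indepNum at hh
      omega
    have hne : s.Nonempty := Finset.card_pos.mp (by omega)
    exact ⟨hne.choose⟩
  have h01 : sCount G 0 ≤ sCount G 1 := by
    rw [sCount_zero, sCount_one]
    exact Fintype.card_pos
  have h12 : sCount G 1 ≤ sCount G 2 := by
    rw [sCount_one]
    exact card_le_sCount_two hwc hα
  refine ⟨h12, ?_⟩
  have hcoeff : ∀ k, (indepPoly G).coeff k = (sCount G k : ℤ) := coeff_indepPoly G
  have hnonneg : ∀ k, 0 ≤ (indepPoly G).coeff k := fun k => by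
    rw [hcoeff]; exact_mod_cast Nat.zero_le _
  have hzero : ∀ k, 4 ≤ k → (indepPoly G).coeff k = 0 := fun k hk => by
    rw [hcoeff, sCount_eq_zero_of_gt (by omega)]; rfl
  have i01 : (indepPoly G).coeff 0 ≤ (indepPoly G).coeff 1 := by
    rw [hcoeff, hcoeff]; exact_mod_cast h01
  have i12 : (indepPoly G).coeff 1 ≤ (indepPoly G).coeff 2 := by
    rw [hcoeff, hcoeff]; exact_mod_cast h12
  rcases le_total (sCount G 2) (sCount G 3) with h23 | h32
  · refine ⟨3, ?_, ?_⟩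
    · intro i j hij hjk
      have i23 : (indepPoly G).coeff 2 ≤ (indepPoly G).coeff 3 := by
        rw [hcoeff, hcoeff]; exact_mod_cast h23
      interval_cases j <;> interval_cases i <;>
        first
        | rfl
        | assumption
        | exact le_trans i01 i12
        | exact le_trans i12 i23
        | exact le_trans i01 (le_trans i12 i23)
    · intro i j hki hij
      rcases Nat.lt_or_ge j 4 with hj | hj
      · have hi4 : i ≤ 3 := by omega
        have hj4 : j ≤ 3 := by omega
        interval_cases i <;> interval_cases j <;> first | rfl | omega
      · rw [hzero j hj]; exact hnonneg i
  · refine ⟨2, ?_, ?_⟩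
    · intro i j hij hjk
      interval_cases j <;> interval_cases i <;>
        first | rfl | assumption | exact le_trans i01 i12
    · intro i j hki hij
      have i32 : (indepPoly G).coeff 3 ≤ (indepPoly G).coeff 2 := by
        rw [hcoeff, hcoeff]; exact_mod_cast h32
      rcases Nat.lt_or_ge j 4 with hj | hj
      · have hi4 : i ≤ 3 := by omega
        have hj4 : j ≤ 3 := by omega
        interval_cases i <;> interval_cases j <;> first | rfl | assumption | omega
      · rw [hzero j hj]; exact hnonneg i

end Final

/-- If `G` is a connected well-covered graph with `α(G) = 3`, then `s₁ ≤ s₂`, and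
consequently the independence polynomial of `G` is unimodal. -/
theorem connected_wellCovered_alpha_three_unimodal {V : Type*} [Fintype V]
    (G : SimpleGraph V) (hc : G.Connected) (hwc : WellCovered G)
    (hα : indepNum G = 3) :
    sCount G 1 ≤ sCount G 2 ∧ PolyUnimodal (indepPoly G) := by
  exact connected_wellCovered_alpha_three_unimodal' hwc hα
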